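/- Let D ⊂ ℝ^d be compact with |D| > 0, H a real Hilbert space, y : D → H continuous, K(s,x) = ⟨y(s),y(x)⟩ with K(x,x) > 0 on D. Let s₁,…,sₙ be distinct points of D with Voronoi cells Dᵢ = {x ∈ D : ‖x−sᵢ‖ = minⱼ‖x−sⱼ‖}, δᵢ = Δ(Dᵢ), and suppose maxᵢ|Dᵢ| ≤ γ·minᵢ|Dᵢ| for some γ ≥ 1. Let λ_{n,1} ≥ … ≥ λ_{n,n} be the eigenvalues of the kernel matrix Vₙ = (K(sᵢ,sⱼ)). Then for every subspace W ⊆ H with dim W ≤ k (1 ≤ k < n): (minᵢ c(δᵢ))·(nγ)⁻¹·|D|·Σ_{i=k+1}^n λ_{n,i} ≤ 2∫_D ‖y(s) − Π_W y(s)‖² ds + 2(1 − minᵢ c(δᵢ))∫_D K(s,s) ds. -/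

import Mathlib

/-!
For `x` in the Voronoi cell `Dᵢ` of `sᵢ` and `c = c(δᵢ)`, both ratios in the definition of `c`
give `⟨y(x), y(sᵢ)⟩² ≥ c K(x,x) K(sᵢ,sᵢ)`, so the best multiple `α y(sᵢ)` of `y(sᵢ)` satisfies
`‖y(x) - α y(sᵢ)‖² ≤ (1 - c) K(x,x)` and `α² ≥ c`. Since `v ↦ v - Π_W v` is linear and
`1`-Lipschitz, this gives pointwise on `Dᵢ`
`c ‖y(sᵢ) - Π_W y(sᵢ)‖² ≤ 2‖y(x) - Π_W y(x)‖² + 2(1 - c) K(x,x)` (Lemma 1).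
Integrating over `Dᵢ`, whose volume is at least `|D|/(nγ)` by the balance condition, and summing
over the cells, which overlap only in null bisector hyperplanes, bounds
`c |D|/(nγ) ∑ᵢ ‖y(sᵢ) - Π_W y(sᵢ)‖²` by the right-hand side.

It remains to see that the projection error of the sample dominates the spectral tail. The
vectors `φⱼ = ∑ₐ uⱼₐ y(sₐ)` are orthogonal with `‖φⱼ‖² = λⱼ`, and the orthogonal change of basis
`u` preserves sums of squared norms. A subspace `W` of dimension at most `k` captures a fraction
`tⱼ ∈ [0, 1]` of each `‖φⱼ‖²` with `∑ⱼ tⱼ ≤ k` (Bessel), hence at most `λ₁ + ⋯ + λₖ` in total.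
-/

open scoped InnerProductSpace
open MeasureTheory Finset

theorem Antitone.sum_mul_le_sum_filter_lt {n k : ℕ} (hkn : k < n) {lam t : Fin n → ℝ}
    (hlam : Antitone lam) (hlam_nonneg : 0 ≤ lam ⟨k, hkn⟩) (ht_nonneg : ∀ j, 0 ≤ t j)
    (ht_le_one : ∀ j, t j ≤ 1) (ht_sum : ∑ j, t j ≤ k) :
    ∑ j, lam j * t j ≤ ∑ j ∈ univ.filter (fun j : Fin n => (j : ℕ) < k), lam j := by
  set μ := lam ⟨k, hkn⟩
  have hcard : #(univ.filter fun j : Fin n => (j : ℕ) < k) = k := by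
    rw [Fin.card_filter_val_lt, min_eq_right hkn.le]
  have hsplit : ∑ j, lam j * t j - ∑ j ∈ univ.filter (fun j : Fin n => (j : ℕ) < k), lam j =
      ∑ j, (lam j - μ) * (t j - if (j : ℕ) < k then 1 else 0) + μ * (∑ j, t j - k) := by
    have h1 : ∑ j ∈ univ.filter (fun j : Fin n => (j : ℕ) < k), lam j
        = ∑ j : Fin n, lam j * if (j : ℕ) < k then 1 else 0 := by
      simp [Finset.sum_filter]
    have h2 : (k : ℝ) = ∑ j : Fin n, if (j : ℕ) < k then 1 else 0 := by
      simp [hcard]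
    rw [h1, h2]
    simp only [sub_mul, mul_sub, Finset.sum_sub_distrib, Finset.mul_sum]
    ring
  -- with `μ = lam k`, each summand is a product of two factors of opposite signs
  have hterm : ∀ j, (lam j - μ) * (t j - if (j : ℕ) < k then 1 else 0) ≤ 0 := by
    intro j
    split_ifs with hj
    · exact mul_nonpos_of_nonneg_of_nonpos (sub_nonneg.2 (hlam (Fin.mk_le_mk.2 hj.le)))
        (sub_nonpos.2 (ht_le_one j))
    · exact mul_nonpos_of_nonpos_of_nonneg (sub_nonpos.2 (hlam (not_lt.1 hj)))
        (by simpa using ht_nonneg j)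
  have hμ : μ * (∑ j, t j - k) ≤ 0 := mul_nonpos_of_nonneg_of_nonpos hlam_nonneg (by linarith)
  linarith [Finset.sum_nonpos fun j (_ : j ∈ univ) => hterm j]

theorem sq_mul_norm_apply_sq_le {E : Type*} [NormedAddCommGroup E] [NormedSpace ℝ E]
    (P : E →L[ℝ] E) (hP : ∀ x, ‖P x‖ ≤ ‖x‖) (a : ℝ) (v w : E) :
    a ^ 2 * ‖P v‖ ^ 2 ≤ 2 * ‖P w‖ ^ 2 + 2 * ‖w - a • v‖ ^ 2 := by
  have htri : |a| * ‖P v‖ ≤ ‖P w‖ + ‖w - a • v‖ :=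
    calc |a| * ‖P v‖ = ‖P w - P (w - a • v)‖ := by
          rw [← map_sub, sub_sub_cancel, map_smul, norm_smul, Real.norm_eq_abs]
      _ ≤ ‖P w‖ + ‖w - a • v‖ := (norm_sub_le _ _).trans (add_le_add_right (hP _) _)
  have hsq := pow_le_pow_left₀ (by positivity) htri 2
  rw [mul_pow, sq_abs] at hsq
  nlinarith [sq_nonneg (‖P w‖ - ‖w - a • v‖)]

section HilbertSpace

variable {H : Type*} [NormedAddCommGroup H] [InnerProductSpace ℝ H]

theorem norm_sub_inner_div_inner_smul_sq {v : H} (hv : ⟪v, v⟫_ℝ ≠ 0) (w : H) :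
    ‖w - (⟪w, v⟫_ℝ / ⟪v, v⟫_ℝ) • v‖ ^ 2 = ⟪w, w⟫_ℝ - ⟪w, v⟫_ℝ ^ 2 / ⟪v, v⟫_ℝ := by
  rw [← real_inner_self_eq_norm_sq, inner_sub_sub_self, real_inner_smul_left,
    real_inner_smul_right, real_inner_smul_left, real_inner_smul_right, real_inner_comm v w]
  field_simp
  ring

theorem mul_norm_sub_starProjection_sq_le (W : Submodule ℝ H) [W.HasOrthogonalProjection]
    {v w : H} {c : ℝ} (hv : 0 < ⟪v, v⟫_ℝ) (hw : 0 < ⟪w, w⟫_ℝ)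
    (hcv : c ≤ (⟪w, v⟫_ℝ / ⟪v, v⟫_ℝ) ^ 2) (hcw : c ≤ (⟪v, w⟫_ℝ / ⟪w, w⟫_ℝ) ^ 2) :
    c * ‖v - W.starProjection v‖ ^ 2 ≤
      2 * ‖w - W.starProjection w‖ ^ 2 + 2 * (1 - c) * ⟪w, w⟫_ℝ := by
  set α := ⟪w, v⟫_ℝ / ⟪v, v⟫_ℝ
  have hcvw : c * (⟪w, w⟫_ℝ * ⟪v, v⟫_ℝ) ≤ ⟪w, v⟫_ℝ ^ 2 := by
    rw [div_pow, le_div_iff₀ (by positivity)] at hcv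
    rw [real_inner_comm, div_pow, le_div_iff₀ (by positivity)] at hcw
    rcases le_total ⟪w, w⟫_ℝ ⟪v, v⟫_ℝ with h | h <;> nlinarith
  have hresidual : ‖w - α • v‖ ^ 2 ≤ (1 - c) * ⟪w, w⟫_ℝ := by
    rw [norm_sub_inner_div_inner_smul_sq hv.ne']
    have : c * ⟪w, w⟫_ℝ ≤ ⟪w, v⟫_ℝ ^ 2 / ⟪v, v⟫_ℝ := by
      rw [le_div_iff₀ hv]; linarith
    linarith
  have herror := sq_mul_norm_apply_sq_le Wᗮ.starProjection Wᗮ.norm_starProjection_apply_le α v w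
  simp only [Submodule.starProjection_orthogonal_val] at herror
  calc c * ‖v - W.starProjection v‖ ^ 2 ≤ α ^ 2 * ‖v - W.starProjection v‖ ^ 2 := by
        gcongr
    _ ≤ 2 * ‖w - W.starProjection w‖ ^ 2 + 2 * (1 - c) * ⟪w, w⟫_ℝ := by linarith

theorem Orthonormal.sum_norm_starProjection_sq_le_finrank {ι : Type*} [Fintype ι]
    {v : ι → H} (hv : Orthonormal ℝ v) (W : Submodule ℝ H) [FiniteDimensional ℝ W] :
    ∑ j, ‖W.starProjection (v j)‖ ^ 2 ≤ Module.finrank ℝ W := by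
  set e := stdOrthonormalBasis ℝ W
  have hparseval : ∀ x, ‖W.starProjection x‖ ^ 2 = ∑ l, ⟪x, (e l : H)⟫_ℝ ^ 2 := fun x => by
    rw [W.starProjection_apply, Submodule.norm_coe, ← e.sum_sq_inner_right]
    simp_rw [Submodule.inner_orthogonalProjectionOnto_eq_of_mem_left, real_inner_comm]
  calc ∑ j, ‖W.starProjection (v j)‖ ^ 2 = ∑ l, ∑ j, ⟪v j, (e l : H)⟫_ℝ ^ 2 := by
        simp_rw [hparseval]; exact Finset.sum_comm
    _ ≤ ∑ l, ‖(e l : H)‖ ^ 2 := by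
        gcongr with l
        simpa using hv.sum_inner_products_le (e l : H) (s := univ)
    _ = Module.finrank ℝ W := by
        simp only [Submodule.norm_coe, e.orthonormal.1, one_pow, sum_const, card_univ,
          Fintype.card_fin, nsmul_eq_mul, mul_one]

theorem orthonormal_normalize_of_pairwise_inner_eq_zero {ι : Type*} {φ : ι → H}
    (hφ : Pairwise fun i j => ⟪φ i, φ j⟫_ℝ = 0) :
    Orthonormal ℝ fun j : {j // φ j ≠ 0} => ‖φ j‖⁻¹ • φ j := by
  classical
  rw [orthonormal_iff_ite]
  rintro ⟨i, hi⟩ ⟨j, hj⟩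
  split_ifs with hij
  · cases hij
    rw [real_inner_self_eq_norm_sq, norm_smul, norm_inv, norm_norm,
      inv_mul_cancel₀ (norm_ne_zero_iff.2 hi), one_pow]
  · rw [real_inner_smul_left, real_inner_smul_right,
      hφ fun h => hij (Subtype.ext h), mul_zero, mul_zero]

theorem sum_norm_starProjection_sq_le_of_pairwise_inner_eq_zero {n k : ℕ} (hkn : k < n)
    {φ : Fin n → H} (hφ : Pairwise fun i j => ⟪φ i, φ j⟫_ℝ = 0)
    (hanti : Antitone fun j => ‖φ j‖ ^ 2) (W : Submodule ℝ H) [FiniteDimensional ℝ W]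
    (hW : Module.finrank ℝ W ≤ k) :
    ∑ j, ‖W.starProjection (φ j)‖ ^ 2 ≤
      ∑ j ∈ univ.filter (fun j : Fin n => (j : ℕ) < k), ‖φ j‖ ^ 2 := by
  classical
  set t : Fin n → ℝ := fun j => ‖W.starProjection (‖φ j‖⁻¹ • φ j)‖ ^ 2
  have hscale : ∀ j, ‖W.starProjection (φ j)‖ ^ 2 = ‖φ j‖ ^ 2 * t j := fun j => by
    by_cases h : φ j = 0
    · simp [h]
    · simp only [t]
      rw [map_smul, norm_smul, mul_pow, ← mul_assoc, norm_inv, norm_norm, ← mul_pow,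
        mul_inv_cancel₀ (norm_ne_zero_iff.2 h), one_pow, one_mul]
  have ht_le_one : ∀ j, t j ≤ 1 := fun j => by
    have hle : ‖‖φ j‖⁻¹ • φ j‖ ≤ 1 := by
      by_cases h : φ j = 0
      · simp [h]
      · rw [norm_smul, norm_inv, norm_norm, inv_mul_cancel₀ (norm_ne_zero_iff.2 h)]
    have := (W.norm_starProjection_apply_le _).trans hle
    simp only [t]
    nlinarith [norm_nonneg (W.starProjection (‖φ j‖⁻¹ • φ j))]
  have ht_sum : ∑ j, t j ≤ k := by
    have hzero : ∀ j, t j ≠ 0 → φ j ≠ 0 := fun j ht h => ht (by simp [t, h])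
    rw [← Finset.sum_filter_of_ne fun j _ => hzero j,
      Finset.sum_subtype (p := fun j => φ j ≠ 0) _ (fun j => by simp)]
    exact (Orthonormal.sum_norm_starProjection_sq_le_finrank
      (orthonormal_normalize_of_pairwise_inner_eq_zero hφ) W).trans (by exact_mod_cast hW)
  simp_rw [hscale]
  exact hanti.sum_mul_le_sum_filter_lt hkn (sq_nonneg _) (fun j => sq_nonneg _) ht_le_one ht_sum

theorem sum_norm_sq_sum_smul_of_orthonormal_rows {ι : Type*} [Fintype ι] [DecidableEq ι]
    {u : ι → ι → ℝ} (hu : ∀ i j, ∑ a, u i a * u j a = if i = j then 1 else 0) (x : ι → H) :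
    ∑ j, ‖∑ a, u j a • x a‖ ^ 2 = ∑ a, ‖x a‖ ^ 2 := by
  have hcols : ∀ a b, ∑ j, u j a * u j b = if a = b then 1 else 0 := by
    have hrows : Matrix.of u * (Matrix.of u).transpose = 1 := by
      ext i j
      simpa [Matrix.mul_apply, Matrix.one_apply] using hu i j
    have hcolsM : (Matrix.of u).transpose * Matrix.of u = 1 := mul_eq_one_comm.1 hrows
    intro a b
    simpa [Matrix.mul_apply, Matrix.one_apply] using congrArg (fun M => M a b) hcolsM
  calc ∑ j, ‖∑ a, u j a • x a‖ ^ 2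
      = ∑ a, ∑ b, (∑ j, u j a * u j b) * ⟪x a, x b⟫_ℝ := by
        simp_rw [← real_inner_self_eq_norm_sq, sum_inner, inner_sum, real_inner_smul_left,
          real_inner_smul_right, Finset.sum_mul]
        rw [Finset.sum_comm]
        refine Finset.sum_congr rfl fun a _ => ?_
        rw [Finset.sum_comm]
        simp only [mul_assoc]
    _ = ∑ a, ‖x a‖ ^ 2 := by simp [hcols]

theorem inner_sum_smul_eigenvectors_gram {ι : Type*} [Fintype ι] [DecidableEq ι] {z : ι → H}
    {V : Matrix ι ι ℝ} (hV : ∀ i j, V i j = ⟪z i, z j⟫_ℝ) {lam : ι → ℝ} {u : ι → ι → ℝ}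
    (hu_orth : ∀ i j, ∑ a, u i a * u j a = if i = j then 1 else 0)
    (hu_eig : ∀ i, V.mulVec (u i) = lam i • u i) (i j : ι) :
    ⟪∑ a, u i a • z a, ∑ b, u j b • z b⟫_ℝ = if i = j then lam j else 0 := by
  have hz : ∀ a, ⟪z a, ∑ b, u j b • z b⟫_ℝ = lam j * u j a := fun a => by
    have := congrFun (hu_eig j) a
    simp only [Matrix.mulVec, dotProduct, hV, Pi.smul_apply, smul_eq_mul] at this
    rw [inner_sum, ← this]
    simp_rw [real_inner_smul_right, mul_comm]
  simp_rw [sum_inner, real_inner_smul_left, hz, mul_left_comm _ (lam j), ← Finset.mul_sum,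
    hu_orth, mul_ite, mul_one, mul_zero]

theorem sum_tail_eigenvalues_le_sum_norm_sub_starProjection_sq {n k : ℕ} (hkn : k < n)
    (z : Fin n → H) (V : Matrix (Fin n) (Fin n) ℝ) (hV : ∀ i j, V i j = ⟪z i, z j⟫_ℝ)
    (lam : Fin n → ℝ) (hlam_anti : Antitone lam) (u : Fin n → Fin n → ℝ)
    (hu_orth : ∀ i j, ∑ a, u i a * u j a = if i = j then 1 else 0)
    (hu_eig : ∀ i, V.mulVec (u i) = lam i • u i)
    (W : Submodule ℝ H) [FiniteDimensional ℝ W] (hW : Module.finrank ℝ W ≤ k) :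
    ∑ i ∈ univ.filter (fun i : Fin n => k ≤ (i : ℕ)), lam i ≤
      ∑ a, ‖z a - W.starProjection (z a)‖ ^ 2 := by
  set φ : Fin n → H := fun j => ∑ a, u j a • z a
  have hgram := inner_sum_smul_eigenvectors_gram hV hu_orth hu_eig
  have hnorm : ∀ j, ‖φ j‖ ^ 2 = lam j := fun j => by
    rw [← real_inner_self_eq_norm_sq, hgram, if_pos rfl]
  have horth : Pairwise fun i j => ⟪φ i, φ j⟫_ℝ = 0 := fun i j hij =>
    (hgram i j).trans (if_neg hij)
  have htrace : ∑ j, lam j = ∑ a, ‖z a‖ ^ 2 := by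
    simp_rw [← hnorm, φ, sum_norm_sq_sum_smul_of_orthonormal_rows hu_orth]
  have hproj : ∑ j, ‖W.starProjection (φ j)‖ ^ 2 = ∑ a, ‖W.starProjection (z a)‖ ^ 2 := by
    simp_rw [φ, map_sum, map_smul, sum_norm_sq_sum_smul_of_orthonormal_rows hu_orth]
  have hhead : ∑ j, ‖W.starProjection (φ j)‖ ^ 2 ≤
      ∑ j ∈ univ.filter (fun j : Fin n => (j : ℕ) < k), lam j := by
    simp_rw [← hnorm]
    exact sum_norm_starProjection_sq_le_of_pairwise_inner_eq_zero hkn horth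
      (by simpa only [hnorm] using hlam_anti) W hW
  have hpyth : ∀ a, ‖z a - W.starProjection (z a)‖ ^ 2 =
      ‖z a‖ ^ 2 - ‖W.starProjection (z a)‖ ^ 2 := fun a => by
    rw [W.norm_sq_eq_add_norm_sq_starProjection (z a), Submodule.starProjection_orthogonal_val]
    ring
  have hsplit := Finset.sum_filter_add_sum_filter_not univ (fun i : Fin n => k ≤ (i : ℕ)) lam
  simp only [not_le] at hsplit
  simp_rw [hpyth, Finset.sum_sub_distrib]
  linarith

end HilbertSpace

theorem MeasureTheory.Measure.addHaar_setOf_dist_eq_dist {E : Type*} [NormedAddCommGroup E]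
    [InnerProductSpace ℝ E] [FiniteDimensional ℝ E] [MeasurableSpace E] [BorelSpace E]
    (μ : Measure E) [μ.IsAddHaarMeasure] {p q : E} (hpq : p ≠ q) :
    μ {x | dist x p = dist x q} = 0 := by
  have hbisector : {x | dist x p = dist x q} = (AffineSubspace.perpBisector p q : Set E) := by
    ext x
    simp [AffineSubspace.mem_perpBisector_iff_dist_eq]
  rw [hbisector]
  exact Measure.addHaar_affineSubspace μ _ (by simpa using hpq)

section Voronoi

variable {X ι : Type*} [PseudoMetricSpace X]

def voronoiCell (D : Set X) (s : ι → X) (i : ι) : Set X :=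
  {x ∈ D | ∀ j, dist x (s i) ≤ dist x (s j)}

variable {D : Set X} {s : ι → X}

theorem voronoiCell_subset (i : ι) : voronoiCell D s i ⊆ D := fun _ hx => hx.1

theorem self_mem_voronoiCell (hs : ∀ i, s i ∈ D) (i : ι) : s i ∈ voronoiCell D s i :=
  ⟨hs i, fun j => by simp [dist_nonneg]⟩

theorem dist_le_diam_voronoiCell (hD : Bornology.IsBounded D) (hs : ∀ i, s i ∈ D) {i : ι}
    {x : X} (hx : x ∈ voronoiCell D s i) : dist x (s i) ≤ Metric.diam (voronoiCell D s i) :=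
  Metric.dist_le_diam_of_mem (hD.subset (voronoiCell_subset i)) hx (self_mem_voronoiCell hs i)

theorem iUnion_voronoiCell [Finite ι] [Nonempty ι] : ⋃ i, voronoiCell D s i = D := by
  refine (Set.iUnion_subset voronoiCell_subset).antisymm fun x hx => ?_
  obtain ⟨i, hi⟩ := Finite.exists_min fun j => dist x (s j)
  exact Set.mem_iUnion.2 ⟨i, hx, hi⟩

theorem isClosed_voronoiCell (hD : IsClosed D) (i : ι) : IsClosed (voronoiCell D s i) := by
  have hcell : voronoiCell D s i = D ∩ ⋂ j, {x | dist x (s i) ≤ dist x (s j)} := by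
    ext x; simp [voronoiCell]
  rw [hcell]
  exact hD.inter <| isClosed_iInter fun j =>
    isClosed_le (continuous_id.dist continuous_const) (continuous_id.dist continuous_const)

end Voronoi

theorem pairwise_aedisjoint_voronoiCell {E ι : Type*} [NormedAddCommGroup E]
    [InnerProductSpace ℝ E] [FiniteDimensional ℝ E] [MeasurableSpace E] [BorelSpace E]
    (μ : Measure E) [μ.IsAddHaarMeasure] (D : Set E) {s : ι → E} (hs : Function.Injective s) :
    Pairwise fun i j => AEDisjoint μ (voronoiCell D s i) (voronoiCell D s j) := fun i j hij =>
  measure_mono_null (fun _ hx => le_antisymm (hx.1.2 j) (hx.2.2 i))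
    (μ.addHaar_setOf_dist_eq_dist (hs.ne hij))

theorem integral_eq_sum_setIntegral_voronoiCell {E ι : Type*} [NormedAddCommGroup E]
    [InnerProductSpace ℝ E] [FiniteDimensional ℝ E] [MeasurableSpace E] [BorelSpace E]
    (μ : Measure E) [μ.IsAddHaarMeasure] [Fintype ι] [Nonempty ι] {D : Set E}
    (hD : IsClosed D) {s : ι → E} (hs : Function.Injective s) {g : E → ℝ}
    (hg : IntegrableOn g D μ) :
    ∫ x in D, g x ∂μ = ∑ i, ∫ x in voronoiCell D s i, g x ∂μ := by
  conv_lhs => rw [← iUnion_voronoiCell (D := D) (s := s)]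
  rw [integral_iUnion_ae (fun i => (isClosed_voronoiCell hD i).measurableSet.nullMeasurableSet)
    (pairwise_aedisjoint_voronoiCell μ D hs) (by rwa [iUnion_voronoiCell]), tsum_fintype]

theorem mul_le_setIntegral_of_le_measureReal {α : Type*} [MeasurableSpace α] {μ : Measure α}
    {s : Set α} {f : α → ℝ} {m C : ℝ} (hm : m ≤ μ.real s) (hC : 0 ≤ C) (hs : MeasurableSet s)
    (hμs : μ s ≠ ⊤) (hf : ∀ x ∈ s, C ≤ f x) (hfi : IntegrableOn f s μ) :
    m * C ≤ ∫ x in s, f x ∂μ :=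
  (mul_le_mul_of_nonneg_right hm hC).trans <| by
    rw [mul_comm]; exact setIntegral_ge_of_const_le_real hs hμs hf hfi

theorem inv_mul_measureReal_iUnion_le {α ι : Type*} [MeasurableSpace α] [Fintype ι]
    {μ : Measure α} {S : ι → Set α} {γ : ℝ} (hγ : 0 < γ)
    (hbal : ∀ i j, μ.real (S i) ≤ γ * μ.real (S j)) (j : ι) :
    (Fintype.card ι * γ)⁻¹ * μ.real (⋃ i, S i) ≤ μ.real (S j) := by
  have hcard : (0 : ℝ) < Fintype.card ι := by exact_mod_cast Fintype.card_pos_iff.2 ⟨j⟩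
  rw [inv_mul_le_iff₀ (mul_pos hcard hγ)]
  calc μ.real (⋃ i, S i) ≤ ∑ i, μ.real (S i) := measureReal_iUnion_fintype_le S
    _ ≤ ∑ _i : ι, γ * μ.real (S j) := Finset.sum_le_sum fun i _ => hbal i j
    _ = Fintype.card ι * γ * μ.real (S j) := by simp [mul_assoc]

noncomputable def kernelModulus {X : Type*} [PseudoMetricSpace X] (D : Set X) (K : X → X → ℝ)
    (δ : ℝ) : ℝ :=
  sInf {r : ℝ | ∃ x₁ ∈ D, ∃ x₂ ∈ D, dist x₁ x₂ ≤ δ ∧ r = (K x₁ x₂ / K x₂ x₂) ^ 2}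

section KernelModulus

variable {X : Type*} [PseudoMetricSpace X] {D : Set X} {K : X → X → ℝ} {δ : ℝ}

theorem kernelModulus_nonneg : 0 ≤ kernelModulus D K δ :=
  Real.sInf_nonneg <| by rintro _ ⟨_, -, _, -, -, rfl⟩; positivity

theorem kernelModulus_le {x₁ x₂ : X} (h₁ : x₁ ∈ D) (h₂ : x₂ ∈ D) (hdist : dist x₁ x₂ ≤ δ) :
    kernelModulus D K δ ≤ (K x₁ x₂ / K x₂ x₂) ^ 2 :=
  csInf_le ⟨0, by rintro _ ⟨_, -, _, -, -, rfl⟩; positivity⟩ ⟨x₁, h₁, x₂, h₂, hdist, rfl⟩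

end KernelModulus

theorem mul_norm_sub_starProjection_sq_le_of_le_kernelModulus {X H : Type*}
    [PseudoMetricSpace X] [NormedAddCommGroup H] [InnerProductSpace ℝ H] {D : Set X}
    {y : X → H} {K : X → X → ℝ} (hK : ∀ s x, K s x = ⟪y s, y x⟫_ℝ)
    (hKpos : ∀ x ∈ D, 0 < K x x) (W : Submodule ℝ H) [W.HasOrthogonalProjection] {c δ : ℝ}
    (hc : c ≤ kernelModulus D K δ) {x₁ x₂ : X} (h₁ : x₁ ∈ D) (h₂ : x₂ ∈ D)
    (hdist : dist x₁ x₂ ≤ δ) :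
    c * ‖y x₂ - W.starProjection (y x₂)‖ ^ 2 ≤
      2 * ‖y x₁ - W.starProjection (y x₁)‖ ^ 2 + 2 * (1 - c) * K x₁ x₁ := by
  have := mul_norm_sub_starProjection_sq_le W (hK _ _ ▸ hKpos _ h₂) (hK _ _ ▸ hKpos _ h₁)
    (by simpa only [hK] using hc.trans (kernelModulus_le h₁ h₂ hdist))
    (by simpa only [hK] using hc.trans (kernelModulus_le h₂ h₁ (by rwa [dist_comm])))
  rwa [hK]

theorem theorem1_core_inequality_general
    {d : ℕ} {H : Type*} [NormedAddCommGroup H] [InnerProductSpace ℝ H]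
    (D : Set (EuclideanSpace ℝ (Fin d))) (hD : IsCompact D)
    (y : EuclideanSpace ℝ (Fin d) → H) (hy : ContinuousOn y D)
    (K : EuclideanSpace ℝ (Fin d) → EuclideanSpace ℝ (Fin d) → ℝ)
    (hK : ∀ s x, K s x = ⟪y s, y x⟫_ℝ)
    (hKpos : ∀ x ∈ D, 0 < K x x)
    (c : ℝ → ℝ)
    (hc : ∀ δ, c δ =
      sInf {r : ℝ | ∃ x₁ ∈ D, ∃ x₂ ∈ D, dist x₁ x₂ ≤ δ ∧ r = (K x₁ x₂ / K x₂ x₂) ^ 2})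
    {n k : ℕ} (hkn : k < n)
    (s : Fin n → EuclideanSpace ℝ (Fin d)) (hs_mem : ∀ i, s i ∈ D)
    (hs_inj : Function.Injective s)
    (Di : Fin n → Set (EuclideanSpace ℝ (Fin d)))
    (hDi : ∀ i, Di i = {x ∈ D | ∀ j, dist x (s i) ≤ dist x (s j)})
    (γ : ℝ) (hγ : 1 ≤ γ)
    (hbal : ∀ i j, (volume (Di i)).toReal ≤ γ * (volume (Di j)).toReal)
    (V : Matrix (Fin n) (Fin n) ℝ)
    (hV : ∀ i j, V i j = K (s i) (s j))
    (lam : Fin n → ℝ)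
    (hlam_anti : Antitone lam)
    (u : Fin n → Fin n → ℝ)
    (hu_orth : ∀ i j, (∑ a, u i a * u j a) = if i = j then 1 else 0)
    (hu_eig : ∀ i, V.mulVec (u i) = lam i • u i)
    (W : Submodule ℝ H) [FiniteDimensional ℝ W] (hW : Module.finrank ℝ W ≤ k) :
    (⨅ i : Fin n, c (Metric.diam (Di i))) * ((n : ℝ) * γ)⁻¹ * (volume D).toReal *
        (∑ i ∈ Finset.univ.filter (fun i : Fin n => k ≤ (i : ℕ)), lam i) ≤
      2 * (∫ x in D, ‖y x - (W.orthogonalProjection (y x) : H)‖ ^ 2) +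
        2 * (1 - ⨅ i : Fin n, c (Metric.diam (Di i))) * ∫ x in D, K x x := by
  obtain rfl : c = kernelModulus D K := funext hc
  obtain rfl : Di = voronoiCell D s := funext hDi
  have : Nonempty (Fin n) := ⟨⟨k, hkn⟩⟩
  have hγ0 : 0 < γ := zero_lt_one.trans_le hγ
  set cmin := ⨅ i, kernelModulus D K (Metric.diam (voronoiCell D s i))
  set m := ((n : ℝ) * γ)⁻¹ * volume.real D
  set ε : Fin n → ℝ := fun a => ‖y (s a) - W.starProjection (y (s a))‖ ^ 2
  set g : EuclideanSpace ℝ (Fin d) → ℝ :=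
    fun x => 2 * ‖y x - W.starProjection (y x)‖ ^ 2 + 2 * (1 - cmin) * K x x
  have hcmin : 0 ≤ cmin := Real.iInf_nonneg fun _ => kernelModulus_nonneg
  have herror_int : IntegrableOn (fun x => ‖y x - W.starProjection (y x)‖ ^ 2) D :=
    ((hy.sub (W.starProjection.continuous.comp_continuousOn hy)).norm.pow 2).integrableOn_compact
      hD
  have hK_int : IntegrableOn (fun x => K x x) D := by
    simpa only [hK] using (hy.inner hy).integrableOn_compact hD
  have hg_int : IntegrableOn g D := (herror_int.const_mul 2).add (hK_int.const_mul _)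
  have hvol : ∀ a, m ≤ volume.real (voronoiCell D s a) := by
    simpa [m, iUnion_voronoiCell] using inv_mul_measureReal_iUnion_le hγ0 hbal
  have hcell : ∀ a, m * (cmin * ε a) ≤ ∫ x in voronoiCell D s a, g x := fun a =>
    mul_le_setIntegral_of_le_measureReal (hvol a) (mul_nonneg hcmin (sq_nonneg _))
      (isClosed_voronoiCell hD.isClosed a).measurableSet
      (measure_ne_top_of_subset (voronoiCell_subset a) hD.measure_lt_top.ne)
      (fun x hx => mul_norm_sub_starProjection_sq_le_of_le_kernelModulus hK hKpos W
        (ciInf_le (Set.finite_range _).bddBelow a) hx.1 (hs_mem a)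
        (dist_le_diam_voronoiCell hD.isBounded hs_mem hx))
      (hg_int.mono_set (voronoiCell_subset a))
  have htail := sum_tail_eigenvalues_le_sum_norm_sub_starProjection_sq hkn (fun a => y (s a)) V
    (by simpa only [hK] using hV) lam hlam_anti u hu_orth hu_eig W hW
  calc cmin * ((n : ℝ) * γ)⁻¹ * volume.real D *
        ∑ i ∈ univ.filter (fun i : Fin n => k ≤ (i : ℕ)), lam i
      = m * cmin * ∑ i ∈ univ.filter (fun i : Fin n => k ≤ (i : ℕ)), lam i := by ring
    _ ≤ ∑ a, m * (cmin * ε a) := by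
        simp_rw [← mul_assoc, ← Finset.mul_sum]
        exact mul_le_mul_of_nonneg_left htail (by positivity)
    _ ≤ ∑ a, ∫ x in voronoiCell D s a, g x := Finset.sum_le_sum fun a _ => hcell a
    _ = ∫ x in D, g x :=
        (integral_eq_sum_setIntegral_voronoiCell volume hD.isClosed hs_inj hg_int).symm
    _ = _ := by
        rw [integral_add (herror_int.const_mul 2) (hK_int.const_mul _), integral_const_mul,
          integral_const_mul]
        rfl

/-- Core finite-sample inequality in the proof of the paper's Theorem 1: with Voronoi cells
`Dᵢ` of the distinct sampling points `s₁,…,sₙ ∈ D`, `δᵢ = Δ(Dᵢ)`,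
`maxᵢ|Dᵢ| ≤ γ·minᵢ|Dᵢ|`, and `λ_{n,1} ≥ … ≥ λ_{n,n}` the eigenvalues of the kernel matrix
`Vₙ = (K(sᵢ,sⱼ))`, every subspace `W ⊆ H` with `dim W ≤ k` satisfies
`(minᵢ c(δᵢ))·(nγ)⁻¹·|D|·∑_{i>k} λ_{n,i}
  ≤ 2∫_D ‖y − Π_W y‖² + 2(1 − minᵢ c(δᵢ))∫_D K(s,s) ds`. -/
theorem theorem1_core_inequality
    {d : ℕ} {H : Type*} [NormedAddCommGroup H] [InnerProductSpace ℝ H] [CompleteSpace H]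
    (D : Set (EuclideanSpace ℝ (Fin d))) (hD : IsCompact D)
    (hDpos : 0 < (volume D).toReal)
    (y : EuclideanSpace ℝ (Fin d) → H) (hy : ContinuousOn y D)
    (K : EuclideanSpace ℝ (Fin d) → EuclideanSpace ℝ (Fin d) → ℝ)
    (hK : ∀ s x, K s x = ⟪y s, y x⟫_ℝ)
    (hKpos : ∀ x ∈ D, 0 < K x x)
    (c : ℝ → ℝ)
    (hc : ∀ δ, c δ =
      sInf {r : ℝ | ∃ x₁ ∈ D, ∃ x₂ ∈ D, dist x₁ x₂ ≤ δ ∧ r = (K x₁ x₂ / K x₂ x₂) ^ 2})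
    {n k : ℕ} (hk : 1 ≤ k) (hkn : k < n)
    (s : Fin n → EuclideanSpace ℝ (Fin d)) (hs_mem : ∀ i, s i ∈ D)
    (hs_inj : Function.Injective s)
    (Di : Fin n → Set (EuclideanSpace ℝ (Fin d)))
    (hDi : ∀ i, Di i = {x ∈ D | ∀ j, dist x (s i) ≤ dist x (s j)})
    (γ : ℝ) (hγ : 1 ≤ γ)
    (hbal : ∀ i j, (volume (Di i)).toReal ≤ γ * (volume (Di j)).toReal)
    (V : Matrix (Fin n) (Fin n) ℝ)
    (hV : ∀ i j, V i j = K (s i) (s j))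
    (lam : Fin n → ℝ)
    (hlam_anti : Antitone lam)
    (u : Fin n → Fin n → ℝ)
    (hu_orth : ∀ i j, (∑ a, u i a * u j a) = if i = j then 1 else 0)
    (hu_eig : ∀ i, V.mulVec (u i) = lam i • u i)
    (W : Submodule ℝ H) [FiniteDimensional ℝ W] (hW : Module.finrank ℝ W ≤ k) :
    (⨅ i : Fin n, c (Metric.diam (Di i))) * ((n : ℝ) * γ)⁻¹ * (volume D).toReal *
        (∑ i ∈ Finset.univ.filter (fun i : Fin n => k ≤ (i : ℕ)), lam i) ≤
      2 * (∫ x in D, ‖y x - (W.orthogonalProjection (y x) : H)‖ ^ 2) +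
        2 * (1 - ⨅ i : Fin n, c (Metric.diam (Di i))) * ∫ x in D, K x x :=
  theorem1_core_inequality_general D hD y hy K hK hKpos c hc hkn s hs_mem hs_inj Di hDi γ hγ hbal V
    hV lam hlam_anti u hu_orth hu_eig W hW
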